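/- Let T be a k-uniform hypertree (a connected acyclic k-uniform hypergraph) and u a vertex of T. Then the path tree T(T,u) of T with respect to u is isomorphic to T. Conversely, if H is connected and T(H,u) is isomorphic to H, then H is a k-uniform hypertree. -/

import Mathlib

/-!
If `H` has no cycle, `lastVert u` is an isomorphism `T(H,u) ≅ H`. It is injective because two
different nonbacktracking paths from `u` with the same end close up to a cycle: after stripping
a common first step and using minimality of the total length, the two paths meet only at their
ends and share no edge except possibly their first one, in which case the cycle starts at the
second vertex of the first path. It is surjective by connectivity. For an edge `e` of `H`, cut a
path from `u` into `e` at its first vertex in `e`: the extensions of this prefix through `e` form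
an edge of `T(H,u)` with image `e`.

Conversely `T(H,u)` itself has no cycle: a vertex `w` of maximal length on a cycle lies on two
cycle edges, each also containing a path no longer than `w`, and any such edge is the one
joining `w` to its parent `w.dropLast`. Cycles pull back along isomorphisms.
-/

open scoped Classical

structure KHypergraph (α : Type*) [DecidableEq α] where
  verts : Finset α
  edges : Finset (Finset α)
  edge_sub : ∀ e ∈ edges, e ⊆ verts

namespace KHypergraph

variable {α : Type*} [DecidableEq α] {β : Type*} [DecidableEq β]

/-- `H` is `k`-uniform: every edge has exactly `k` vertices. -/
def IsUniform (H : KHypergraph α) (k : ℕ) : Prop := ∀ e ∈ H.edges, e.card = k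

/-- The degree of a vertex: the number of edges containing it. -/
def degree (H : KHypergraph α) (v : α) : ℕ := (H.edges.filter (fun e => v ∈ e)).card

/-- `Δ` is the maximum degree of `H`. -/
def maxDegree (H : KHypergraph α) (Δ : ℕ) : Prop :=
  (∀ v, H.degree v ≤ Δ) ∧ ∃ v ∈ H.verts, H.degree v = Δ

/-- Two vertices are adjacent if some edge contains both. -/
def Adj (H : KHypergraph α) (a b : α) : Prop := ∃ e ∈ H.edges, a ∈ e ∧ b ∈ e

/-- `H` is connected: nonempty and any two vertices joined by a walk. -/
def Connected (H : KHypergraph α) : Prop :=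
  H.verts.Nonempty ∧ ∀ a ∈ H.verts, ∀ b ∈ H.verts, Relation.ReflTransGen H.Adj a b

/-- A matching: a set of pairwise disjoint edges of `H`. -/
def IsMatching (H : KHypergraph α) (M : Finset (Finset α)) : Prop :=
  M ⊆ H.edges ∧ ∀ e ∈ M, ∀ f ∈ M, e ≠ f → Disjoint e f

/-- `p(H, r)`: the number of matchings of size `r`. -/
noncomputable def matchCount (H : KHypergraph α) (r : ℕ) : ℕ :=
  (H.edges.powerset.filter (fun M => M.card = r ∧ H.IsMatching M)).card

/-- The matching polynomial `μ(H,x) = Σ_r (-1)^r p(H,r) x^{|V| - k r}`. -/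
noncomputable def matchingPoly (H : KHypergraph α) (k : ℕ) : Polynomial ℝ :=
  ∑ r ∈ Finset.range (H.edges.card + 1),
    Polynomial.C ((-1 : ℝ) ^ r * (H.matchCount r : ℝ)) * Polynomial.X ^ (H.verts.card - k * r)

/-- Deleting a set of vertices: induced sub-hypergraph on `verts \ W`. -/
def delete (H : KHypergraph α) (W : Finset α) : KHypergraph α where
  verts := H.verts \ W
  edges := H.edges.filter (fun e => Disjoint e W)
  edge_sub := by
    intro e he
    simp only [Finset.mem_filter] at he
    exact Finset.subset_sdiff.mpr ⟨H.edge_sub e he.1, he.2⟩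

/-- The set of moduli of the complex zeros of a real polynomial. -/
def rootModuli (p : Polynomial ℝ) : Set ℝ :=
  {m | ∃ z : ℂ, (Polynomial.aeval z) p = 0 ∧ ‖z‖ = m}

/-- `λ(H)`: the maximum modulus of the complex zeros of the matching polynomial. -/
noncomputable def lam (H : KHypergraph α) (k : ℕ) : ℝ :=
  sSup (rootModuli (H.matchingPoly k))


/-! ### Paths, cycles and path trees -/

variable {α : Type*} [DecidableEq α]

/-- The sequence of vertices `v₀ = u, v₁, …` visited by a walk encoded as a list of
(edge, next-vertex) steps. -/
def vertAt (u : α) (p : List (Finset α × α)) (t : ℕ) : α :=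
  (u :: p.map Prod.snd).getD t u

/-- The terminal vertex of a walk starting at `u`. -/
def lastVert (u : α) (p : List (Finset α × α)) : α :=
  (p.map Prod.snd).getLastD u

/-- `p` is a nonbacktracking path in `H` starting at `u`: the vertices and the edges
are distinct, consecutive conditions `v_{t}, v_{t+1} ∈ e_{t+1}` hold, and edge
`e_{t+1}` contains none of the vertices `v₀, …, v_{t-1}`. -/
def IsNBPath (H : KHypergraph α) (u : α) (p : List (Finset α × α)) : Prop :=
  u ∈ H.verts ∧ (p.map Prod.fst).Nodup ∧ (u :: p.map Prod.snd).Nodup ∧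
  ∀ t < p.length,
    (p.getD t (∅, u)).1 ∈ H.edges ∧
    vertAt u p t ∈ (p.getD t (∅, u)).1 ∧
    (p.getD t (∅, u)).2 ∈ (p.getD t (∅, u)).1 ∧
    ∀ i < t, vertAt u p i ∉ (p.getD t (∅, u)).1

/-- `H` contains a cycle: a closed walk of positive length with distinct edges,
distinct vertices except that the first and last coincide, and consecutive vertices
distinct. -/
def HasCycle (H : KHypergraph α) : Prop :=
  ∃ (u : α) (p : List (Finset α × α)), u ∈ H.verts ∧ p ≠ [] ∧
    (p.map Prod.fst).Nodup ∧ (p.map Prod.snd).Nodup ∧ lastVert u p = u ∧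
    ∀ t < p.length,
      (p.getD t (∅, u)).1 ∈ H.edges ∧
      vertAt u p t ∈ (p.getD t (∅, u)).1 ∧
      (p.getD t (∅, u)).2 ∈ (p.getD t (∅, u)).1 ∧
      vertAt u p t ≠ (p.getD t (∅, u)).2

/-- A `k`-uniform hypertree: connected and acyclic. -/
def IsHypertree (H : KHypergraph α) (k : ℕ) : Prop :=
  H.IsUniform k ∧ H.Connected ∧ ¬ H.HasCycle

/-- The vertex set of the path tree: all nonbacktracking paths in `H` starting at `u`. -/
noncomputable def pathTreeVerts (H : KHypergraph α) (u : α) [Fintype α] :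
    Finset (List (Finset α × α)) :=
  Set.Finite.toFinset (s := {p | H.IsNBPath u p}) (by
    apply Set.Finite.subset
      (List.finite_length_le (Finset α × α) (Fintype.card (Finset α)))
    intro p hp
    have hnd : (p.map Prod.fst).Nodup := hp.2.1
    have := hnd.length_le_card
    simpa using this)

/-- The path tree `T(H,u)` of `H` with respect to `u`: vertices are the
nonbacktracking paths starting at `u`; a path `p₁` together with its continuations
through a common terminal edge `e` (one for each vertex of `e` other than the terminal
vertex of `p₁`) forms an edge. -/
noncomputable def pathTree (H : KHypergraph α) (u : α) [Fintype α] :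
    KHypergraph (List (Finset α × α)) where
  verts := pathTreeVerts H u
  edges := ((pathTreeVerts H u ×ˢ H.edges).filter
      (fun q => (q.2.erase (lastVert u q.1)).Nonempty ∧
        ∀ v ∈ q.2.erase (lastVert u q.1), H.IsNBPath u (q.1 ++ [(q.2, v)]))).image
      (fun q => insert q.1 ((q.2.erase (lastVert u q.1)).image
        (fun v => q.1 ++ [(q.2, v)])))
  edge_sub := by
    intro E hE
    simp only [Finset.mem_image, Finset.mem_filter, Finset.mem_product] at hE
    obtain ⟨q, ⟨⟨hq1, _⟩, _, hall⟩, rfl⟩ := hE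
    intro p hp
    simp only [Finset.mem_insert, Finset.mem_image] at hp
    rcases hp with rfl | ⟨v, hv, rfl⟩
    · exact hq1
    · unfold pathTreeVerts
      rw [Set.Finite.mem_toFinset]
      exact hall v hv

/-- Isomorphism of hypergraphs: a bijection between the vertex sets carrying edges
onto edges. -/
def Isom {β : Type*} [DecidableEq β] (H₁ : KHypergraph α) (H₂ : KHypergraph β) : Prop :=
  ∃ f : α → β, Set.BijOn f ↑H₁.verts ↑H₂.verts ∧
    (∀ e ∈ H₁.edges, e.image f ∈ H₂.edges) ∧
    (∀ E ∈ H₂.edges, ∃ e ∈ H₁.edges, e.image f = E)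

end KHypergraph

theorem List.nodup_iff_injOn_getD {β : Type*} {l : List β} (d : β) :
    l.Nodup ↔ Set.InjOn (l.getD · d) (Set.Iio l.length) := by
  rw [List.nodup_iff_injective_getElem]
  constructor
  · intro h i hi j hj hij
    simp only [Set.mem_Iio] at hi hj
    simp only [List.getD_eq_getElem _ _ hi, List.getD_eq_getElem _ _ hj] at hij
    exact congrArg Fin.val (@h ⟨i, hi⟩ ⟨j, hj⟩ hij)
  · rintro h ⟨i, hi⟩ ⟨j, hj⟩ hij
    refine Fin.ext (h hi hj ?_)
    simpa only [List.getD_eq_getElem _ _ hi, List.getD_eq_getElem _ _ hj] using hij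

theorem Set.injOn_update_Iio {β : Type*} {f : ℕ → β} {n : ℕ} {x : β}
    (hf : Set.InjOn f (Set.Iio n)) (hx : ∀ i < n, f i ≠ x) :
    Set.InjOn (Function.update f n x) (Set.Iio (n + 1)) := by
  rw [Set.Iio_add_one_eq_Iic, ← Set.Iio_insert, Set.injOn_insert Set.self_notMem_Iio]
  refine ⟨hf.congr fun i hi => (Function.update_of_ne (ne_of_lt hi) _ _).symm, ?_⟩
  rintro ⟨i, hi, hix⟩
  rw [Function.update_self, Function.update_of_ne (ne_of_lt hi)] at hix
  exact hx i hi hix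

theorem Set.InjOn.update {ι β : Type*} [DecidableEq ι] {f : ι → β} {s : Set ι} {a : ι}
    {x : β} (hf : Set.InjOn f s) (hx : ∀ i ∈ s, i ≠ a → f i ≠ x) :
    Set.InjOn (Function.update f a x) s := by
  intro i hi j hj hij
  by_cases hia : i = a <;> by_cases hja : j = a
  · exact hia.trans hja.symm
  · subst hia
    rw [Function.update_self, Function.update_of_ne hja] at hij
    exact absurd hij.symm (hx j hj hja)
  · subst hja
    rw [Function.update_self, Function.update_of_ne hia] at hij
    exact absurd hij (hx i hi hia)
  · rw [Function.update_of_ne hia, Function.update_of_ne hja] at hij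
    exact hf hi hj hij

namespace KHypergraph

section Lists

variable {α : Type*} {u : α} {p q : List (Finset α × α)}

def edgeAt (u : α) (p : List (Finset α × α)) (t : ℕ) : Finset α := (p.getD t (∅, u)).1

theorem vertAt_succ (u : α) (p : List (Finset α × α)) (t : ℕ) :
    vertAt u p (t + 1) = (p.getD t (∅, u)).2 :=
  List.getD_map p (∅, u) Prod.snd

theorem lastVert_eq_vertAt (u : α) (p : List (Finset α × α)) :
    lastVert u p = vertAt u p p.length := by
  rcases List.eq_nil_or_concat p with rfl | ⟨q, x, rfl⟩
  · rfl
  · simp [lastVert, vertAt_succ]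

theorem lastVert_concat (u : α) (p : List (Finset α × α)) (x : Finset α × α) :
    lastVert u (p ++ [x]) = x.2 := by
  simp [lastVert]

theorem injOn_vertAt_iff :
    Set.InjOn (vertAt u p) (Set.Iic p.length) ↔ (u :: p.map Prod.snd).Nodup := by
  rw [List.nodup_iff_injOn_getD u, List.length_cons, List.length_map, Set.Iio_add_one_eq_Iic]
  rfl

theorem injOn_edgeAt_iff :
    Set.InjOn (edgeAt u p) (Set.Iio p.length) ↔ (p.map Prod.fst).Nodup := by
  rw [List.nodup_iff_injOn_getD ∅, List.length_map]
  exact Set.EqOn.injOn_iff fun t _ => (List.getD_map p (∅, u) Prod.fst).symm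

theorem vertAt_take {i t : ℕ} (ht : t ≤ i) : vertAt u (p.take i) t = vertAt u p t := by
  rcases t with _ | t
  · rfl
  · simp only [vertAt_succ, List.getD_eq_getElem?_getD, List.getElem?_take,
      if_pos (by omega : t < i)]

theorem edgeAt_take {i t : ℕ} (ht : t < i) : edgeAt u (p.take i) t = edgeAt u p t := by
  simp only [edgeAt, List.getD_eq_getElem?_getD, List.getElem?_take, if_pos ht]

theorem lastVert_take {i : ℕ} (hi : i ≤ p.length) : lastVert u (p.take i) = vertAt u p i := by
  rw [lastVert_eq_vertAt, List.length_take, min_eq_left hi, vertAt_take le_rfl]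

theorem eqOn_vertAt_concat (e : Finset α) (v : α) :
    Set.EqOn (Function.update (vertAt u p) (p.length + 1) v) (vertAt u (p ++ [(e, v)]))
      (Set.Iic (p.length + 1)) := by
  intro t ht
  rcases eq_or_ne t (p.length + 1) with rfl | hne
  · rw [Function.update_self, vertAt_succ, List.getD_append_right _ _ _ _ le_rfl]
    simp
  · rw [Function.update_of_ne hne]
    rcases t with _ | t
    · rfl
    · rw [vertAt_succ, vertAt_succ, List.getD_append _ _ _ _ (by simp at ht; omega)]

theorem eqOn_edgeAt_concat (e : Finset α) (v : α) :
    Set.EqOn (Function.update (edgeAt u p) p.length e) (edgeAt u (p ++ [(e, v)]))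
      (Set.Iio (p.length + 1)) := by
  intro t ht
  rcases eq_or_ne t p.length with rfl | hne
  · simp [edgeAt]
  · rw [Function.update_of_ne hne, edgeAt, edgeAt,
      List.getD_append _ _ _ _ (by simp at ht; omega)]

theorem eq_of_vertAt_eq_of_edgeAt_eq (hlen : p.length = q.length)
    (hV : ∀ t ≤ p.length, vertAt u p t = vertAt u q t)
    (hE : ∀ t < p.length, edgeAt u p t = edgeAt u q t) : p = q := by
  refine List.ext_getElem hlen fun t h₁ h₂ => Prod.ext ?_ ?_
  · have := hE t h₁
    rwa [edgeAt, edgeAt, List.getD_eq_getElem _ _ h₁, List.getD_eq_getElem _ _ h₂] at this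
  · have := hV (t + 1) (by omega)
    rwa [vertAt_succ, vertAt_succ, List.getD_eq_getElem _ _ h₁,
      List.getD_eq_getElem _ _ h₂] at this

theorem exists_first_vertAt_mem {e : Finset α} (h : lastVert u p ∈ e) :
    ∃ i ≤ p.length, vertAt u p i ∈ e ∧ ∀ j < i, vertAt u p j ∉ e := by
  have hex : ∃ i, i ≤ p.length ∧ vertAt u p i ∈ e :=
    ⟨p.length, le_rfl, lastVert_eq_vertAt u p ▸ h⟩
  obtain ⟨hi, hie⟩ := Nat.find_spec hex
  exact ⟨Nat.find hex, hi, hie, fun j hj hje => Nat.find_min hex hj ⟨by omega, hje⟩⟩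

end Lists

variable {α : Type*} [DecidableEq α] {H : KHypergraph α}

section Walks

variable {n : ℕ} {V : ℕ → α} {E : ℕ → Finset α}

/-- Walks are encoded by index functions: vertices `V 0, …, V n` and edges `E 0, …, E (n - 1)`,
with `E t` joining `V t` and `V (t + 1)`; the values at other indices play no role. -/
structure IsWalk (H : KHypergraph α) (n : ℕ) (V : ℕ → α) (E : ℕ → Finset α) :
    Prop where
  edge_mem : ∀ t < n, E t ∈ H.edges
  mem_edge : ∀ t < n, V t ∈ E t
  succ_mem_edge : ∀ t < n, V (t + 1) ∈ E t
  ne_succ : ∀ t < n, V t ≠ V (t + 1)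

structure IsCycle (H : KHypergraph α) (n : ℕ) (V : ℕ → α) (E : ℕ → Finset α) :
    Prop where
  pos : 0 < n
  closed : V n = V 0
  injOn_vert : Set.InjOn V (Set.Ioc 0 n)
  injOn_edge : Set.InjOn E (Set.Iio n)
  isWalk : H.IsWalk n V E

structure IsNBWalk (H : KHypergraph α) (n : ℕ) (V : ℕ → α) (E : ℕ → Finset α) :
    Prop where
  injOn_vert : Set.InjOn V (Set.Iic n)
  injOn_edge : Set.InjOn E (Set.Iio n)
  edge_mem : ∀ t < n, E t ∈ H.edges
  mem_edge : ∀ t < n, V t ∈ E t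
  succ_mem_edge : ∀ t < n, V (t + 1) ∈ E t
  notMem_edge : ∀ t < n, ∀ i < t, V i ∉ E t

theorem IsWalk.append_reverse {n' : ℕ} {V' : ℕ → α} {E' : ℕ → Finset α}
    (hw : H.IsWalk n V E) (hw' : H.IsWalk n' V' E') (hend : V n = V' n') :
    H.IsWalk (n + n') (fun t => if t ≤ n then V t else V' (n + n' - t))
      (fun t => if t < n then E t else E' (n + n' - 1 - t)) := by
  set C : ℕ → α := fun t => if t ≤ n then V t else V' (n + n' - t)
  set D : ℕ → Finset α := fun t => if t < n then E t else E' (n + n' - 1 - t)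
  have step : ∀ t < n + n',
      D t ∈ H.edges ∧ C t ∈ D t ∧ C (t + 1) ∈ D t ∧ C t ≠ C (t + 1) := by
    intro t ht
    by_cases htn : t < n
    · simp only [C, D, if_pos htn, if_pos htn.le, if_pos (show t + 1 ≤ n by omega)]
      exact ⟨hw.edge_mem t htn, hw.mem_edge t htn, hw.succ_mem_edge t htn, hw.ne_succ t htn⟩
    · obtain ⟨i, hi, rfl⟩ : ∃ i < n', t = n + n' - 1 - i :=
        ⟨n + n' - 1 - t, by omega, by omega⟩
      have hC : C (n + n' - 1 - i) = V' (i + 1) := by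
        by_cases hin : n + n' - 1 - i ≤ n
        · rw [show n + n' - 1 - i = n by omega, show i + 1 = n' by omega, ← hend]
          simp [C]
        · simp only [C, if_neg hin, show n + n' - (n + n' - 1 - i) = i + 1 by omega]
      have hC' : C (n + n' - 1 - i + 1) = V' i := by
        simp only [C, if_neg (show ¬ n + n' - 1 - i + 1 ≤ n by omega),
          show n + n' - (n + n' - 1 - i + 1) = i by omega]
      have hD : D (n + n' - 1 - i) = E' i := by
        simp only [D, if_neg htn, show n + n' - 1 - (n + n' - 1 - i) = i by omega]
      rw [hC, hC', hD]
      exact ⟨hw'.edge_mem i hi, hw'.succ_mem_edge i hi, hw'.mem_edge i hi,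
        (hw'.ne_succ i hi).symm⟩
  exact ⟨fun t ht => (step t ht).1, fun t ht => (step t ht).2.1,
    fun t ht => (step t ht).2.2.1, fun t ht => (step t ht).2.2.2⟩

namespace IsNBWalk

theorem isWalk (h : H.IsNBWalk n V E) : H.IsWalk n V E where
  edge_mem := h.edge_mem
  mem_edge := h.mem_edge
  succ_mem_edge := h.succ_mem_edge
  ne_succ t ht heq := by
    have := h.injOn_vert (Set.mem_Iic.2 ht.le) (Set.mem_Iic.2 ht) heq
    omega

theorem congr {V' : ℕ → α} {E' : ℕ → Finset α} (h : H.IsNBWalk n V E)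
    (hV : Set.EqOn V V' (Set.Iic n)) (hE : Set.EqOn E E' (Set.Iio n)) :
    H.IsNBWalk n V' E' := by
  have hV' : ∀ t < n, V' t = V t ∧ V' (t + 1) = V (t + 1) := fun t ht =>
    ⟨(hV (Set.mem_Iic.2 ht.le)).symm, (hV (Set.mem_Iic.2 ht)).symm⟩
  have hE' : ∀ t < n, E' t = E t := fun t ht => (hE (Set.mem_Iio.2 ht)).symm
  refine ⟨h.injOn_vert.congr hV, h.injOn_edge.congr hE,
    fun t ht => ?_, fun t ht => ?_, fun t ht => ?_, fun t ht i hi => ?_⟩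
  · rw [hE' t ht]; exact h.edge_mem t ht
  · rw [hE' t ht, (hV' t ht).1]; exact h.mem_edge t ht
  · rw [hE' t ht, (hV' t ht).2]; exact h.succ_mem_edge t ht
  · rw [hE' t ht, (hV' i (hi.trans ht)).1]; exact h.notMem_edge t ht i hi

theorem of_le {m : ℕ} (h : H.IsNBWalk n V E) (hm : m ≤ n) : H.IsNBWalk m V E :=
  ⟨h.injOn_vert.mono (Set.Iic_subset_Iic.2 hm), h.injOn_edge.mono (Set.Iio_subset_Iio hm),
    fun t ht => h.edge_mem t (by omega), fun t ht => h.mem_edge t (by omega),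
    fun t ht => h.succ_mem_edge t (by omega), fun t ht => h.notMem_edge t (by omega)⟩

theorem tail (h : H.IsNBWalk (n + 1) V E) :
    H.IsNBWalk n (fun t => V (t + 1)) (fun t => E (t + 1)) := by
  refine ⟨fun s hs t ht hst => ?_, fun s hs t ht hst => ?_, fun t ht => h.edge_mem _ (by omega),
    fun t ht => h.mem_edge _ (by omega), fun t ht => h.succ_mem_edge _ (by omega),
    fun t ht i hi => h.notMem_edge _ (by omega) _ (by omega)⟩
  · simp only [Set.mem_Iic] at hs ht
    have := h.injOn_vert (Set.mem_Iic.2 (by omega)) (Set.mem_Iic.2 (by omega)) hst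
    omega
  · simp only [Set.mem_Iio] at hs ht
    have := h.injOn_edge (Set.mem_Iio.2 (by omega)) (Set.mem_Iio.2 (by omega)) hst
    omega

theorem snoc {Y : Finset α} {x : α} (h : H.IsNBWalk n V E) (hY : Y ∈ H.edges)
    (hlast : V n ∈ Y) (hx : x ∈ Y) (hxV : ∀ i ≤ n, V i ≠ x) (hVY : ∀ i < n, V i ∉ Y) :
    H.IsNBWalk (n + 1) (Function.update V (n + 1) x) (Function.update E n Y) := by
  have hV : ∀ i ≤ n, Function.update V (n + 1) x i = V i := fun i hi =>
    Function.update_of_ne (by omega) _ _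
  have hE : ∀ i < n, Function.update E n Y i = E i := fun i hi =>
    Function.update_of_ne (by omega) _ _
  have step : ∀ t < n + 1, Function.update E n Y t ∈ H.edges ∧
      Function.update V (n + 1) x t ∈ Function.update E n Y t ∧
      Function.update V (n + 1) x (t + 1) ∈ Function.update E n Y t ∧
      ∀ i < t, Function.update V (n + 1) x i ∉ Function.update E n Y t := by
    intro t ht
    rcases Nat.lt_succ_iff_lt_or_eq.1 ht with ht | rfl
    · rw [hE t ht, hV t ht.le, hV (t + 1) ht]
      exact ⟨h.edge_mem t ht, h.mem_edge t ht, h.succ_mem_edge t ht,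
        fun i hi => by rw [hV i (by omega)]; exact h.notMem_edge t ht i hi⟩
    · rw [Function.update_self, Function.update_self, hV t le_rfl]
      exact ⟨hY, hlast, hx, fun i hi => by rw [hV i hi.le]; exact hVY i hi⟩
  refine ⟨?_,
    Set.injOn_update_Iio h.injOn_edge fun i hi heq => hVY i hi (heq ▸ h.mem_edge i hi),
    fun t ht => (step t ht).1, fun t ht => (step t ht).2.1, fun t ht => (step t ht).2.2.1,
    fun t ht => (step t ht).2.2.2⟩
  have hinj := h.injOn_vert
  rw [← Set.Iio_add_one_eq_Iic] at hinj ⊢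
  exact Set.injOn_update_Iio hinj fun i hi => hxV i (by omega)

end IsNBWalk

end Walks

section Paths

variable {u : α} {p q : List (Finset α × α)} {e : Finset α}

theorem isNBPath_iff :
    H.IsNBPath u p ↔ u ∈ H.verts ∧ H.IsNBWalk p.length (vertAt u p) (edgeAt u p) := by
  simp only [IsNBPath, ← injOn_vertAt_iff, ← injOn_edgeAt_iff (u := u), ← vertAt_succ]
  constructor
  · rintro ⟨hu, hE, hV, h⟩
    exact ⟨hu, hV, hE, fun t ht => (h t ht).1, fun t ht => (h t ht).2.1,
      fun t ht => (h t ht).2.2.1, fun t ht => (h t ht).2.2.2⟩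
  · rintro ⟨hu, h⟩
    exact ⟨hu, h.injOn_edge, h.injOn_vert, fun t ht =>
      ⟨h.edge_mem t ht, h.mem_edge t ht, h.succ_mem_edge t ht, h.notMem_edge t ht⟩⟩

theorem IsNBPath.take (hp : H.IsNBPath u p) (i : ℕ) : H.IsNBPath u (p.take i) := by
  rw [isNBPath_iff] at hp ⊢
  refine ⟨hp.1, (hp.2.of_le (List.length_take_le' i p)).congr ?_ ?_⟩
  · exact fun t ht => (vertAt_take (le_trans ht (by simp))).symm
  · exact fun t ht => (edgeAt_take (lt_of_lt_of_le ht (by simp))).symm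

theorem IsNBPath.concat {v : α} (hp : H.IsNBPath u p) (he : e ∈ H.edges)
    (hlast : lastVert u p ∈ e) (hv : v ∈ e) (hvp : ∀ i ≤ p.length, vertAt u p i ≠ v)
    (hmiss : ∀ i < p.length, vertAt u p i ∉ e) : H.IsNBPath u (p ++ [(e, v)]) := by
  rw [isNBPath_iff] at hp ⊢
  rw [lastVert_eq_vertAt] at hlast
  refine ⟨hp.1, ?_⟩
  rw [List.length_append, List.length_singleton]
  exact (hp.2.snoc he hlast hv hvp hmiss).congr (eqOn_vertAt_concat e v) (eqOn_edgeAt_concat e v)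

theorem IsNBPath.lastVert_mem_of_concat {v : α} (h : H.IsNBPath u (p ++ [(e, v)])) :
    lastVert u p ∈ e := by
  have := (isNBPath_iff.1 h).2.mem_edge p.length (by simp)
  rwa [← eqOn_vertAt_concat e v (Set.mem_Iic.2 (Nat.le_succ _)),
    ← eqOn_edgeAt_concat e v (Set.mem_Iio.2 (Nat.lt_succ_self _)), Function.update_self,
    Function.update_of_ne (by omega), ← lastVert_eq_vertAt] at this

theorem IsNBPath.lastVert_mem_verts (hp : H.IsNBPath u p) : lastVert u p ∈ H.verts := by
  rw [isNBPath_iff] at hp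
  rw [lastVert_eq_vertAt]
  rcases Nat.eq_zero_or_eq_succ_pred p.length with h | h
  · rw [h]; exact hp.1
  · rw [h]
    exact H.edge_sub _ (hp.2.edge_mem _ (by omega)) (hp.2.succ_mem_edge _ (by omega))

end Paths

section Cycles

variable {n : ℕ} {V : ℕ → α} {E : ℕ → Finset α}

theorem HasCycle.exists_isCycle (h : H.HasCycle) : ∃ n V E, H.IsCycle n V E := by
  obtain ⟨u, p, -, hne, hE, hV, hlast, hstep⟩ := h
  refine ⟨p.length, vertAt u p, edgeAt u p, ⟨List.length_pos_iff.2 hne, ?_, ?_,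
    injOn_edgeAt_iff.2 hE, ?_⟩⟩
  · rw [← lastVert_eq_vertAt, hlast]
    rfl
  · rintro _ ⟨hs, hs'⟩ _ ⟨ht, ht'⟩ hst
    obtain ⟨s, rfl⟩ := Nat.exists_eq_add_one.2 hs
    obtain ⟨t, rfl⟩ := Nat.exists_eq_add_one.2 ht
    rw [vertAt, vertAt, List.getD_cons_succ, List.getD_cons_succ] at hst
    have := (List.nodup_iff_injOn_getD u).1 hV (by simp; omega) (by simp; omega) hst
    rw [this]
  · refine ⟨fun t ht => (hstep t ht).1, fun t ht => (hstep t ht).2.1, fun t ht => ?_,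
      fun t ht => ?_⟩ <;> rw [vertAt_succ]
    exacts [(hstep t ht).2.2.1, (hstep t ht).2.2.2]

theorem IsCycle.hasCycle (h : H.IsCycle n V E) : H.HasCycle := by
  set p := (List.range n).map fun t => (E t, V (t + 1)) with hp
  have hlen : p.length = n := by simp [p]
  have hget : ∀ t < n, p.getD t (∅, V 0) = (E t, V (t + 1)) := fun t ht => by
    simp [p, ht]
  have hvert : ∀ t ≤ n, vertAt (V 0) p t = V t := by
    rintro (_ | t) ht
    · rfl
    · rw [vertAt_succ, hget t ht]
  refine ⟨V 0, p, ?_, ?_, ?_, ?_, ?_, fun t ht => ?_⟩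
  · exact H.edge_sub _ (h.isWalk.edge_mem 0 h.pos) (h.isWalk.mem_edge 0 h.pos)
  · rw [← List.length_pos_iff, hlen]
    exact h.pos
  · rw [hp, List.map_map]
    exact List.nodup_range.map_on fun s hs t ht hst =>
      h.injOn_edge (List.mem_range.1 hs) (List.mem_range.1 ht) hst
  · rw [hp, List.map_map]
    refine List.nodup_range.map_on fun s hs t ht hst => ?_
    have := h.injOn_vert (by simpa using List.mem_range.1 hs) (by simpa using List.mem_range.1 ht)
      hst
    omega
  · rw [lastVert_eq_vertAt, hlen, hvert n le_rfl, h.closed]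
  · rw [hlen] at ht
    rw [hget t ht, hvert t ht.le]
    exact ⟨h.isWalk.edge_mem t ht, h.isWalk.mem_edge t ht, h.isWalk.succ_mem_edge t ht,
      h.isWalk.ne_succ t ht⟩

theorem HasCycle.map {β : Type*} [DecidableEq β] {H' : KHypergraph β} {g : α → β}
    (hg : Set.InjOn g H.verts) (hedge : ∀ e ∈ H.edges, e.image g ∈ H'.edges)
    (h : H.HasCycle) : H'.HasCycle := by
  obtain ⟨n, V, E, hc⟩ := h.exists_isCycle
  have hw := hc.isWalk
  have hEv : ∀ t < n, E t ⊆ H.verts := fun t ht => H.edge_sub _ (hw.edge_mem t ht)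
  refine IsCycle.hasCycle (V := g ∘ V) (E := fun t => (E t).image g)
    ⟨hc.pos, congrArg g hc.closed, fun s hs t ht hst => ?_, fun s hs t ht hst => ?_,
      ⟨fun t ht => hedge _ (hw.edge_mem t ht),
        fun t ht => Finset.mem_image_of_mem g (hw.mem_edge t ht),
        fun t ht => Finset.mem_image_of_mem g (hw.succ_mem_edge t ht),
        fun t ht hgt => hw.ne_succ t ht (hg (hEv t ht (hw.mem_edge t ht))
          (hEv t ht (hw.succ_mem_edge t ht)) hgt)⟩⟩
  · have hmem : ∀ r ∈ Set.Ioc 0 n, V r ∈ H.verts := fun r hr => by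
      obtain ⟨r, rfl⟩ := Nat.exists_eq_add_one.2 hr.1
      exact hEv r (by simp at hr; omega) (hw.succ_mem_edge r (by simp at hr; omega))
    exact hc.injOn_vert hs ht (hg (hmem s hs) (hmem t ht) hst)
  · exact hc.injOn_edge hs ht
      ((Finset.image_eq_image_iff_of_injOn hg (hEv s hs) (hEv t ht)).1 hst)

theorem HasCycle.of_isom {β : Type*} [DecidableEq β] {H' : KHypergraph β} (hiso : H'.Isom H)
    (h : H.HasCycle) : H'.HasCycle := by
  obtain ⟨f, hbij, -, hsurj⟩ := hiso
  have : Nonempty β := by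
    obtain ⟨u, -, hu, -⟩ := h
    obtain ⟨x, -, -⟩ := hbij.surjOn hu
    exact ⟨x⟩
  have hinv := hbij.invOn_invFunOn
  refine h.map hinv.2.injOn fun e he => ?_
  obtain ⟨e', he', rfl⟩ := hsurj e he
  have hid : Set.EqOn (Function.invFunOn f H'.verts ∘ f) id e' := fun x hx =>
    hinv.1 (H'.edge_sub e' he' hx)
  rwa [Finset.image_image, Finset.image_congr hid, Finset.image_id]

theorem hasCycle_of_walks {n' : ℕ} {V' : ℕ → α} {E' : ℕ → Finset α}
    (hw : H.IsWalk n V E) (hw' : H.IsWalk n' V' E') (hpos : 0 < n + n')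
    (h0 : V 0 = V' 0) (hend : V n = V' n')
    (hV : Set.InjOn V (Set.Ioc 0 n)) (hV' : Set.InjOn V' (Set.Iio n'))
    (hE : Set.InjOn E (Set.Iio n)) (hE' : Set.InjOn E' (Set.Iio n'))
    (hVV' : ∀ s ∈ Set.Ioc 0 n, ∀ t < n', V s ≠ V' t)
    (hEE' : ∀ s < n, ∀ t < n', E s ≠ E' t) :
    H.HasCycle := by
  set C : ℕ → α := fun t => if t ≤ n then V t else V' (n + n' - t)
  set D : ℕ → Finset α := fun t => if t < n then E t else E' (n + n' - 1 - t)
  refine IsCycle.hasCycle (n := n + n') (V := C) (E := D)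
    ⟨hpos, ?_, ?_, ?_, hw.append_reverse hw' hend⟩
  · by_cases hn' : n' = 0
    · simp [C, hn', hend, h0]
    · simp [C, hn', h0]
  · rintro s ⟨hs, hs'⟩ t ⟨ht, ht'⟩ hst
    simp only [C] at hst
    split_ifs at hst with hsn htn htn
    · exact hV ⟨hs, hsn⟩ ⟨ht, htn⟩ hst
    · exact absurd hst (hVV' s ⟨hs, hsn⟩ _ (by omega))
    · exact absurd hst.symm (hVV' t ⟨ht, htn⟩ _ (by omega))
    · have := hV' (show n + n' - s < n' by omega) (show n + n' - t < n' by omega) hst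
      omega
  · intro s hs t ht hst
    simp only [Set.mem_Iio] at hs ht
    simp only [D] at hst
    split_ifs at hst with hsn htn htn
    · exact hE hsn htn hst
    · exact absurd hst (hEE' s hsn _ (by omega))
    · exact absurd hst.symm (hEE' t htn _ (by omega))
    · have := hE' (show n + n' - 1 - s < n' by omega) (show n + n' - 1 - t < n' by omega) hst
      omega

end Cycles

section Uniqueness

variable {n n' : ℕ} {V V' : ℕ → α} {E E' : ℕ → Finset α}

theorem hasCycle_of_isNBWalk_of_edge_ne (hp : H.IsNBWalk n V E) (hq : H.IsNBWalk n' V' E')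
    (hn' : 0 < n') (h0 : V 0 = V' 0) (hend : V n = V' n') (hE0 : E 0 ≠ E' 0)
    (hV : ∀ s ≤ n, ∀ t ≤ n', s + t < n + n' → V s = V' t → s = 0)
    (hE : ∀ s < n, ∀ t < n', E s = E' t → s = 0 ∧ t = 0) : H.HasCycle :=
  hasCycle_of_walks hp.isWalk hq.isWalk (by omega) h0 hend
    (hp.injOn_vert.mono Set.Ioc_subset_Iic_self) (hq.injOn_vert.mono Set.Iio_subset_Iic_self)
    hp.injOn_edge hq.injOn_edge
    (fun s hs t ht h => hs.1.ne' (hV s hs.2 t ht.le (by have := hs.2; omega) h))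
    fun s hs t ht h => hE0 (by obtain ⟨rfl, rfl⟩ := hE s hs t ht h; exact h)

/-- The cycle runs from `V 1` along the first walk to the common end, back along the second one
to `V' 1`, and through the common first edge back to `V 1`. -/
theorem hasCycle_of_isNBWalk_of_edge_eq (hp : H.IsNBWalk n V E) (hq : H.IsNBWalk n' V' E')
    (hn : 0 < n) (hn' : 0 < n') (hend : V n = V' n') (hE0 : E 0 = E' 0) (hV1 : V 1 ≠ V' 1)
    (hV : ∀ s ≤ n, ∀ t ≤ n', s + t < n + n' → V s = V' t → s = 0)
    (hE : ∀ s < n, ∀ t < n', E s = E' t → s = 0 ∧ t = 0) : H.HasCycle := by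
  obtain ⟨m, rfl⟩ := Nat.exists_eq_add_one.2 hn
  have hp' := hp.tail
  have hV1t : ∀ t < n', t ≠ 0 → V' t ≠ V 1 := fun t ht ht0 h => by
    have := hV 1 (by omega) t ht.le (by omega) h.symm
    omega
  refine hasCycle_of_walks (V' := Function.update V' 0 (V 1)) (E' := E') hp'.isWalk
    ⟨hq.edge_mem, fun t ht => ?_, fun t ht => ?_, fun t ht => ?_⟩ (by omega) (by simp)
    (by rw [Function.update_of_ne (show n' ≠ 0 by omega)]; exact hend)
    (hp'.injOn_vert.mono Set.Ioc_subset_Iic_self)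
    ((hq.injOn_vert.mono Set.Iio_subset_Iic_self).update fun t ht ht0 => hV1t t ht ht0)
    hp'.injOn_edge hq.injOn_edge ?_
    fun s hs t ht h => by have := hE (s + 1) (by omega) t ht h; omega
  · rcases eq_or_ne t 0 with rfl | ht0
    · rw [Function.update_self, ← hE0]
      exact hp.succ_mem_edge 0 (by omega)
    · rw [Function.update_of_ne ht0]
      exact hq.mem_edge t ht
  · rw [Function.update_of_ne (show t + 1 ≠ 0 by omega)]
    exact hq.succ_mem_edge t ht
  · rw [Function.update_of_ne (show t + 1 ≠ 0 by omega)]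
    rcases eq_or_ne t 0 with rfl | ht0
    · rwa [Function.update_self]
    · rw [Function.update_of_ne ht0]
      exact hq.isWalk.ne_succ t ht
  · rintro s ⟨hs, hs'⟩ t ht h
    rcases eq_or_ne t 0 with rfl | ht0
    · rw [Function.update_self] at h
      have := hp.injOn_vert (Set.mem_Iic.2 (by omega)) (Set.mem_Iic.2 (by omega)) h
      omega
    · rw [Function.update_of_ne ht0] at h
      have := hV (s + 1) (by omega) t ht.le (by omega) h
      omega

theorem IsNBWalk.eq_of_endpoints_eq (hH : ¬ H.HasCycle) (hp : H.IsNBWalk n V E)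
    (hq : H.IsNBWalk n' V' E') (h0 : V 0 = V' 0) (hend : V n = V' n') :
    n = n' ∧ (∀ t ≤ n, V t = V' t) ∧ ∀ t < n, E t = E' t := by
  induction hN : n + n' using Nat.strong_induction_on generalizing n n' V V' E E' with
  | _ N ih =>
  rcases Nat.eq_zero_or_pos n with rfl | hn
  · obtain rfl : n' = 0 := hq.injOn_vert (Set.mem_Iic.2 le_rfl) (Set.mem_Iic.2 (Nat.zero_le _))
      (hend.symm.trans h0)
    exact ⟨rfl, fun t ht => by rwa [Nat.le_zero.1 ht], fun t ht => absurd ht t.not_lt_zero⟩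
  rcases Nat.eq_zero_or_pos n' with rfl | hn'
  · have := hp.injOn_vert (Set.mem_Iic.2 le_rfl) (Set.mem_Iic.2 (Nat.zero_le _))
      (hend.trans h0.symm)
    omega
  obtain ⟨m, rfl⟩ := Nat.exists_eq_add_one.2 hn
  obtain ⟨m', rfl⟩ := Nat.exists_eq_add_one.2 hn'
  by_cases hfirst : E 0 = E' 0 ∧ V 1 = V' 1
  · obtain ⟨rfl, hV, hE⟩ := ih (m + m') (by omega) hp.tail hq.tail hfirst.2 hend rfl
    refine ⟨rfl, fun t ht => ?_, fun t ht => ?_⟩ <;> rcases t with _ | t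
    exacts [h0, hV t (by omega), hfirst.1, hE t (by omega)]
  -- By minimality, the walks meet only at their ends and share at most their first edge.
  have hV : ∀ s ≤ m + 1, ∀ t ≤ m' + 1, s + t < m + 1 + (m' + 1) → V s = V' t → s = 0 := by
    intro s hs t ht hst heq
    obtain ⟨rfl, hV, hE⟩ := ih (s + t) (by omega) (hp.of_le hs) (hq.of_le ht) h0 heq rfl
    by_contra hs0
    exact hfirst ⟨hE 0 (by omega), hV 1 (by omega)⟩
  have hE : ∀ s < m + 1, ∀ t < m' + 1, E s = E' t → s = 0 ∧ t = 0 := by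
    intro s hs t ht heq
    rcases Nat.eq_zero_or_pos s with rfl | hs0
    · refine ⟨rfl, Nat.eq_zero_of_not_pos fun ht0 => hq.notMem_edge t ht 0 ht0 ?_⟩
      rw [← heq, ← h0]
      exact hp.mem_edge 0 hs
    -- Cutting the second walk after step `t`, redirected to `V s`, gives a shorter pair.
    have hq' := (hq.of_le ht.le).snoc (hq.edge_mem t ht) (hq.mem_edge t ht)
      (heq ▸ hp.mem_edge s hs)
      (fun i hi h => by have := hV s hs.le i (by omega) (by omega) h.symm; omega)
      (fun i hi => hq.notMem_edge t ht i hi)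
    rw [Function.update_eq_self] at hq'
    obtain ⟨rfl, -, hE⟩ := ih (s + (t + 1)) (by omega) (hp.of_le hs.le) hq'
      (by rw [Function.update_of_ne (show 0 ≠ t + 1 by omega)]; exact h0) (by simp) rfl
    have := hp.injOn_edge (Set.mem_Iio.2 (by omega)) (Set.mem_Iio.2 hs)
      ((hE t (by omega)).trans heq.symm)
    omega
  exfalso
  by_cases hE0 : E 0 = E' 0
  · exact hH (hasCycle_of_isNBWalk_of_edge_eq hp hq hn hn' hend hE0 (fun h => hfirst ⟨hE0, h⟩)
      hV hE)
  · exact hH (hasCycle_of_isNBWalk_of_edge_ne hp hq hn' h0 hend hE0 hV hE)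

end Uniqueness

section PathTree

variable {u : α} {p q : List (Finset α × α)} {e : Finset α}

theorem IsNBPath.eq_of_lastVert_eq (hH : ¬ H.HasCycle) (hp : H.IsNBPath u p)
    (hq : H.IsNBPath u q) (h : lastVert u p = lastVert u q) : p = q := by
  rw [isNBPath_iff] at hp hq
  rw [lastVert_eq_vertAt, lastVert_eq_vertAt] at h
  obtain ⟨hlen, hV, hE⟩ := hp.2.eq_of_endpoints_eq hH hq.2 rfl h
  exact eq_of_vertAt_eq_of_edgeAt_eq hlen hV hE

theorem IsNBPath.take_concat {i : ℕ} {v : α} (hp : H.IsNBPath u p) (he : e ∈ H.edges)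
    (hi : i ≤ p.length) (hie : vertAt u p i ∈ e) (hmin : ∀ j < i, vertAt u p j ∉ e)
    (hv : v ∈ e) (hvp : ∀ j ≤ i, vertAt u p j ≠ v) :
    H.IsNBPath u (p.take i ++ [(e, v)]) := by
  have hlen : (p.take i).length = i := by simp [hi]
  refine (hp.take i).concat he (by rwa [lastVert_take hi]) hv (fun j hj => ?_) fun j hj => ?_
  · rw [vertAt_take (by omega)]
    exact hvp j (by omega)
  · rw [vertAt_take (by omega)]
    exact hmin j (by omega)

theorem exists_isNBPath_lastVert_eq (hu : u ∈ H.verts) {v : α}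
    (h : Relation.ReflTransGen H.Adj u v) : ∃ p, H.IsNBPath u p ∧ lastVert u p = v := by
  induction h with
  | refl => exact ⟨[], ⟨hu, List.nodup_nil, by simp, by simp⟩, rfl⟩
  | @tail _ c _ hbc ih =>
    obtain ⟨p, hp, rfl⟩ := ih
    obtain ⟨e, he, hb, hc⟩ := hbc
    by_cases hcp : ∀ i ≤ p.length, vertAt u p i ≠ c
    · obtain ⟨i, hi, hie, hmin⟩ := exists_first_vertAt_mem hb
      exact ⟨_, hp.take_concat he hi hie hmin hc fun j hj => hcp j (by omega),
        lastVert_concat _ _ _⟩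
    · push Not at hcp
      obtain ⟨i, hi, rfl⟩ := hcp
      exact ⟨p.take i, hp.take i, lastVert_take hi⟩

def pathTreeEdge (u : α) (p : List (Finset α × α)) (e : Finset α) :
    Finset (List (Finset α × α)) :=
  insert p ((e.erase (lastVert u p)).image fun v => p ++ [(e, v)])

theorem image_lastVert_pathTreeEdge (h : lastVert u p ∈ e) :
    (pathTreeEdge u p e).image (lastVert u) = e := by
  rw [pathTreeEdge, Finset.image_insert, Finset.image_image]
  have : (e.erase (lastVert u p)).image (lastVert u ∘ fun v => p ++ [(e, v)]) =
      e.erase (lastVert u p) := by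
    simp [Function.comp_def, lastVert_concat]
  rw [this, Finset.insert_erase h]

theorem pathTreeEdge_eq_of_mem_of_length_le {w w' : List (Finset α × α)}
    (hw : w ∈ pathTreeEdge u p e) (hw' : w' ∈ pathTreeEdge u p e) (hne : w' ≠ w)
    (hlen : w'.length ≤ w.length) :
    pathTreeEdge u p e = pathTreeEdge u w.dropLast (w.getLastD (∅, u)).1 := by
  simp only [pathTreeEdge, Finset.mem_insert, Finset.mem_image] at hw hw'
  rcases hw with rfl | ⟨v, -, rfl⟩
  · rcases hw' with rfl | ⟨v', -, rfl⟩
    · exact absurd rfl hne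
    · simp at hlen
  · rw [List.dropLast_concat, List.getLastD_concat]

variable [Fintype α]

theorem mem_pathTreeVerts : p ∈ pathTreeVerts H u ↔ H.IsNBPath u p :=
  Set.Finite.mem_toFinset _

theorem mem_pathTree_edges {F : Finset (List (Finset α × α))} :
    F ∈ (H.pathTree u).edges ↔ ∃ p e, H.IsNBPath u p ∧ e ∈ H.edges ∧
      (e.erase (lastVert u p)).Nonempty ∧
      (∀ v ∈ e.erase (lastVert u p), H.IsNBPath u (p ++ [(e, v)])) ∧
      pathTreeEdge u p e = F := by
  simp only [pathTree, Finset.mem_image, Finset.mem_filter, Finset.mem_product, mem_pathTreeVerts,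
    Prod.exists, and_assoc]
  rfl

theorem eq_pathTreeEdge_of_mem_of_length_le {F : Finset (List (Finset α × α))}
    {w w' : List (Finset α × α)} (hF : F ∈ (H.pathTree u).edges) (hw : w ∈ F)
    (hw' : w' ∈ F)
    (hne : w' ≠ w) (hlen : w'.length ≤ w.length) :
    F = pathTreeEdge u w.dropLast (w.getLastD (∅, u)).1 := by
  obtain ⟨p, e, -, -, -, -, rfl⟩ := mem_pathTree_edges.1 hF
  exact pathTreeEdge_eq_of_mem_of_length_le hw hw' hne hlen

theorem not_hasCycle_pathTree : ¬ (H.pathTree u).HasCycle := by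
  intro h
  obtain ⟨n, V, E, hc⟩ := h.exists_isCycle
  have hw := hc.isWalk
  have hn : 2 ≤ n := by
    by_contra hn
    obtain rfl : n = 1 := by have := hc.pos; omega
    exact hw.ne_succ 0 one_pos hc.closed.symm
  obtain ⟨s, hs, hmax⟩ := Finset.exists_max_image (Finset.Ioc 0 n) (fun t => (V t).length)
    ⟨n, by simp; omega⟩
  rw [Finset.mem_Ioc] at hs
  have hmax' : ∀ t ≤ n, (V t).length ≤ (V s).length := by
    intro t ht
    rcases Nat.eq_zero_or_pos t with rfl | ht0
    · rw [← hc.closed]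
      exact hmax n (by simp; omega)
    · exact hmax t (by simp; omega)
  obtain ⟨o, ho, hVo, hos⟩ : ∃ o < n, V o = V s ∧ o ≠ s - 1 := by
    rcases hs.2.lt_or_eq with hsn | rfl
    · exact ⟨s, hsn, rfl, by omega⟩
    · exact ⟨0, hc.pos, hc.closed.symm, by omega⟩
  have hs1 : s - 1 + 1 = s := by omega
  have hin := eq_pathTreeEdge_of_mem_of_length_le (hw.edge_mem (s - 1) (by omega))
    (hs1 ▸ hw.succ_mem_edge (s - 1) (by omega)) (hw.mem_edge (s - 1) (by omega))
    (hs1 ▸ hw.ne_succ (s - 1) (by omega)) (hmax' _ (by omega))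
  have hout := eq_pathTreeEdge_of_mem_of_length_le (hw.edge_mem o ho)
    (hVo ▸ hw.mem_edge o ho) (hw.succ_mem_edge o ho) (hVo ▸ (hw.ne_succ o ho).symm)
    (hmax' _ ho)
  exact hos (hc.injOn_edge (Set.mem_Iio.2 ho) (Set.mem_Iio.2 (by omega)) (hout.trans hin.symm))

theorem bijOn_lastVert (hH : ¬ H.HasCycle) (hconn : H.Connected) (hu : u ∈ H.verts) :
    Set.BijOn (lastVert u) (H.pathTree u).verts H.verts := by
  refine ⟨fun p hp => (mem_pathTreeVerts.1 hp).lastVert_mem_verts,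
    fun p hp q hq h => (mem_pathTreeVerts.1 hp).eq_of_lastVert_eq hH (mem_pathTreeVerts.1 hq) h,
    fun v hv => ?_⟩
  obtain ⟨p, hp, rfl⟩ := exists_isNBPath_lastVert_eq hu (hconn.2 u hu v hv)
  exact ⟨p, mem_pathTreeVerts.2 hp, rfl⟩

theorem image_lastVert_mem_edges {F : Finset (List (Finset α × α))}
    (hF : F ∈ (H.pathTree u).edges) : F.image (lastVert u) ∈ H.edges := by
  obtain ⟨p, e, -, he, ⟨v, hv⟩, hext, rfl⟩ := mem_pathTree_edges.1 hF
  rwa [image_lastVert_pathTreeEdge (hext v hv).lastVert_mem_of_concat]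

theorem exists_pathTree_edge_image_eq (hconn : H.Connected) (hu : u ∈ H.verts)
    (he : e ∈ H.edges) (hcard : 2 ≤ e.card) :
    ∃ F ∈ (H.pathTree u).edges, F.image (lastVert u) = e := by
  obtain ⟨x, hx⟩ : e.Nonempty := Finset.card_pos.1 (by omega)
  obtain ⟨p, hp, rfl⟩ := exists_isNBPath_lastVert_eq hu (hconn.2 u hu x (H.edge_sub e he hx))
  obtain ⟨i, hi, hie, hmin⟩ := exists_first_vertAt_mem hx
  have hlast : lastVert u (p.take i) ∈ e := by rwa [lastVert_take hi]
  refine ⟨pathTreeEdge u (p.take i) e, mem_pathTree_edges.2 ⟨p.take i, e, hp.take i, he, ?_,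
    fun v hv => ?_, rfl⟩, image_lastVert_pathTreeEdge hlast⟩
  · rw [← Finset.card_pos, Finset.card_erase_of_mem hlast]
    omega
  · rw [lastVert_take hi] at hv
    refine hp.take_concat he hi hie hmin (Finset.mem_of_mem_erase hv) fun j hj hjv => ?_
    rcases hj.lt_or_eq with hj | rfl
    · exact hmin j hj (hjv ▸ Finset.mem_of_mem_erase hv)
    · exact Finset.ne_of_mem_erase hv hjv.symm

end PathTree

end KHypergraph

/-- A `k`-uniform hypertree is isomorphic to each of its path trees; conversely, a
connected `k`-graph isomorphic to one of its path trees is a hypertree. -/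
theorem pathTree_isom_iff_hypertree {α : Type*} [DecidableEq α] [Fintype α]
    (H : KHypergraph α) (k : ℕ) (hk : 2 ≤ k) (hH : H.IsUniform k)
    (hconn : H.Connected) (u : α) (hu : u ∈ H.verts) :
    (¬ H.HasCycle → (H.pathTree u).Isom H) ∧
      ((H.pathTree u).Isom H → ¬ H.HasCycle) :=
  ⟨fun hacyc => ⟨KHypergraph.lastVert u, KHypergraph.bijOn_lastVert hacyc hconn hu,
      fun _ hF => KHypergraph.image_lastVert_mem_edges hF,
      fun e he => KHypergraph.exists_pathTree_edge_image_eq hconn hu he (hH e he ▸ hk)⟩,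
    fun hiso hcyc => KHypergraph.not_hasCycle_pathTree (hcyc.of_isom hiso)⟩
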